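/- arXiv:2008.13115 — 5 statements merged into one kernel-verified Lean document; each statement's English description precedes it below -/
import Mathlib

section
/- In any finite argumentation framework, the set of complete extensions ordered by set inclusion has a least element (the grounded extension). -/
/-- E is conflict-free: no member of E attacks another member of E. -/
def ConflictFree {α : Type*} (att : α → α → Prop) (E : Set α) : Prop :=
  ∀ a ∈ E, ∀ b ∈ E, ¬ att a b

/-- a is defended by E: every attacker of a is attacked by some member of E. -/
def Defends {α : Type*} (att : α → α → Prop) (E : Set α) (a : α) : Prop :=
  ∀ b, att b a → ∃ c ∈ E, att c b

/-- E is a complete extension: conflict-free and equal to the set of arguments it defends. -/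
def CompleteExt {α : Type*} (att : α → α → Prop) (E : Set α) : Prop :=
  ConflictFree att E ∧ E = {a | Defends att E a}

/-- E is a stable extension: conflict-free and attacks every argument outside E. -/
def StableExt {α : Type*} (att : α → α → Prop) (E : Set α) : Prop :=
  ConflictFree att E ∧ ∀ a ∉ E, ∃ b ∈ E, att b a

/-- G is the grounded extension: the least complete extension under inclusion. -/
def IsGrounded {α : Type*} (att : α → α → Prop) (G : Set α) : Prop :=
  CompleteExt att G ∧ ∀ E, CompleteExt att E → G ⊆ E


/-- The characteristic function of the framework. -/
def Fc {α : Type*} (att : α → α → Prop) (E : Set α) : Set α := {a | Defends att E a}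

lemma Fc_mono {α : Type*} (att : α → α → Prop) {E E' : Set α} (h : E ⊆ E') :
    Fc att E ⊆ Fc att E' := by
  intro a ha b hb
  obtain ⟨c, hc, hcb⟩ := ha b hb
  exact ⟨c, h hc, hcb⟩

lemma chain_step {α : Type*} (att : α → α → Prop) (n : ℕ) :
    (Fc att)^[n] ∅ ⊆ (Fc att)^[n+1] ∅ := by
  induction n with
  | zero => simp
  | succ n ih =>
    rw [Function.iterate_succ_apply', Function.iterate_succ_apply']
    exact Fc_mono att ih

lemma cf_step {α : Type*} (att : α → α → Prop) {E : Set α} (hcf : ConflictFree att E) :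
    ConflictFree att (Fc att E) := by
  intro a ha b hb hab
  obtain ⟨c, hc, hca⟩ := hb a hab
  obtain ⟨d, hd, hdc⟩ := ha c hca
  exact hcf d hd c hc hdc

lemma chain_cf {α : Type*} (att : α → α → Prop) (n : ℕ) :
    ConflictFree att ((Fc att)^[n] ∅) := by
  induction n with
  | zero => intro a ha; exact absurd ha (Set.notMem_empty a)
  | succ n ih =>
    rw [Function.iterate_succ_apply']
    exact cf_step att ih

lemma chain_le_prefixed {α : Type*} (att : α → α → Prop) {X : Set α}
    (hX : Fc att X ⊆ X) (n : ℕ) : (Fc att)^[n] ∅ ⊆ X := by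
  induction n with
  | zero => simp
  | succ n ih =>
    rw [Function.iterate_succ_apply']
    exact (Fc_mono att ih).trans hX

lemma exists_fixed {α : Type*} [Fintype α] (att : α → α → Prop) :
    ∃ n, Fc att ((Fc att)^[n] ∅) = (Fc att)^[n] ∅ := by
  classical
  by_contra h
  push_neg at h
  have hsm : StrictMono (fun n => (Fc att)^[n] (∅ : Set α)) := by
    apply strictMono_nat_of_lt_succ
    intro n
    refine lt_of_le_of_ne (chain_step att n) (fun he => h n ?_)
    rw [Function.iterate_succ_apply'] at he
    exact he.symm
  have : Finite ℕ := Finite.of_injective _ hsm.injective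
  exact not_finite ℕ

/-- In any finite argumentation framework, the set of complete extensions ordered by
set inclusion has a least element (the grounded extension). -/
theorem stmt_0 {α : Type*} [Fintype α] (att : α → α → Prop) :
    ∃ G : Set α, CompleteExt att G ∧ ∀ E : Set α, CompleteExt att E → G ⊆ E := by
  obtain ⟨n, hn⟩ := exists_fixed att
  refine ⟨(Fc att)^[n] ∅, ⟨chain_cf att n, hn.symm⟩, ?_⟩
  intro E hE
  apply chain_le_prefixed att _ n
  intro a ha
  rw [hE.2]
  exact ha
end

section
/- If an argumentation framework is well-founded (there is no infinite sequence of arguments a₁, a₂, … with a_{i+1} attacking a_i for each i), then it has exactly one complete extension. -/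
/-- The unique "accepted" predicate defined by well-founded recursion. -/
noncomputable def AccP {α : Type*} (att : α → α → Prop) (hwf : WellFounded att) : α → Prop :=
  hwf.fix (fun a ih => ∀ b, (h : att b a) → ¬ ih b h)

lemma accP_iff {α : Type*} (att : α → α → Prop) (hwf : WellFounded att) (a : α) :
    AccP att hwf a ↔ ∀ b, att b a → ¬ AccP att hwf b := by
  unfold AccP
  rw [WellFounded.fix_eq]

lemma accP_exists {α : Type*} (att : α → α → Prop) (hwf : WellFounded att) {a : α}
    (h : ¬ AccP att hwf a) : ∃ c, att c a ∧ AccP att hwf c := by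
  by_contra hc
  push_neg at hc
  exact h ((accP_iff att hwf a).2 fun b hb hacc => hc b hb hacc)

/-- A well-founded argumentation framework has exactly one complete extension. -/
theorem stmt_1 {α : Type*} [Fintype α] (att : α → α → Prop)
    (hwf : WellFounded att) :
    ∃! E : Set α, CompleteExt att E := by
  set G : Set α := {a | AccP att hwf a} with hG
  have hcomp : CompleteExt att G := by
    constructor
    · intro a ha b hb hab
      exact ((accP_iff att hwf b).1 hb) a hab ha
    · ext a
      constructor
      · intro ha b hb
        obtain ⟨c, hcb, hc⟩ := accP_exists att hwf (((accP_iff att hwf a).1 ha) b hb)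
        exact ⟨c, hc, hcb⟩
      · intro ha
        refine (accP_iff att hwf a).2 fun b hb hbacc => ?_
        obtain ⟨c, hc, hcb⟩ := ha b hb
        exact ((accP_iff att hwf b).1 hbacc) c hcb hc
  refine ⟨G, hcomp, fun E hE => ?_⟩
  have key : ∀ a, a ∈ E ↔ AccP att hwf a := by
    have hwf' : WellFounded (Relation.TransGen att) := hwf.transGen
    intro a
    induction a using hwf'.induction with
    | _ a ih =>
      constructor
      · intro ha
        refine (accP_iff att hwf a).2 fun b hb hbacc => ?_
        have hdef : Defends att E a := by
          have := hE.2 ▸ ha; exact this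
        obtain ⟨c, hcE, hcb⟩ := hdef b hb
        have hcacc : AccP att hwf c :=
          (ih c (Relation.TransGen.head hcb (Relation.TransGen.single hb))).1 hcE
        exact ((accP_iff att hwf b).1 hbacc) c hcb hcacc
      · intro ha
        have hdef : Defends att E a := by
          intro b hb
          obtain ⟨c, hcb, hc⟩ := accP_exists att hwf (((accP_iff att hwf a).1 ha) b hb)
          exact ⟨c, (ih c (Relation.TransGen.head hcb (Relation.TransGen.single hb))).2 hc,
            hcb⟩
        rw [hE.2]; exact hdef
  ext a
  rw [key a]; rfl
end

section
/- In a well-founded argumentation framework, every argument in the grounded extension's framework is either accepted or rejected in the unique complete extension; that is, no argument is undecided. -/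
/-- In a well-founded argumentation framework, every argument is either accepted
or rejected in the unique complete extension; no argument is undecided. -/
theorem stmt_2 {α : Type*} [Fintype α] (att : α → α → Prop)
    (hwf : WellFounded att) :
    ∀ E : Set α, CompleteExt att E → ∀ a : α, a ∈ E ∨ ∃ b ∈ E, att b a := by
  intro E hE
  intro a
  induction a using hwf.induction with
  | _ a ih =>
    by_cases h : ∀ b, att b a → ∃ c ∈ E, att c b
    · left
      have := hE.2
      rw [this]
      exact h
    · push_neg at h
      obtain ⟨b, hba, hb⟩ := h
      rcases ih b hba with hbE | ⟨c, hcE, hcb⟩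
      · exact Or.inr ⟨b, hbE, hba⟩
      · exact absurd hcb (hb c hcE)
end

section
/- For any finite acyclic attack relation (viewed as a finite DAG), the argumentation framework is well-founded and hence every completist semantics (any nonempty set of complete extensions) yields the same unique extension, namely the grounded extension. -/
section Aux

variable {α : Type*} (att : α → α → Prop)

/-- The grounded membership predicate, defined by well-founded recursion on
the transitive closure of the attack relation. -/
noncomputable def groundedMem (hwf : WellFounded (Relation.TransGen att)) : α → Prop :=
  hwf.fix (fun a ih => ∀ b, ∀ hb : att b a,
    ∃ c, ∃ hc : att c b, ih c (Relation.TransGen.head hc (Relation.TransGen.single hb)))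

theorem groundedMem_iff (hwf : WellFounded (Relation.TransGen att)) (a : α) :
    groundedMem att hwf a ↔ ∀ b, att b a → ∃ c, att c b ∧ groundedMem att hwf c := by
  rw [groundedMem, WellFounded.fix_eq]
  constructor
  · intro h b hb
    obtain ⟨c, hc, h'⟩ := h b hb
    exact ⟨c, hc, h'⟩
  · intro h b hb
    obtain ⟨c, hc, h'⟩ := h b hb
    exact ⟨c, hc, h'⟩

theorem groundedMem_noConflict (hwf : WellFounded (Relation.TransGen att)) :
    ∀ a, groundedMem att hwf a → ∀ c, groundedMem att hwf c → ¬ att c a := by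
  intro a
  induction a using hwf.induction with
  | _ a ih =>
    intro ha c hc hca
    obtain ⟨d, hdc, hd⟩ := (groundedMem_iff att hwf a).1 ha c hca
    exact ih c (Relation.TransGen.single hca) hc d hd hdc

theorem groundedMem_complete (hwf : WellFounded (Relation.TransGen att)) :
    CompleteExt att {a | groundedMem att hwf a} := by
  constructor
  · intro a ha b hb
    exact groundedMem_noConflict att hwf b hb a ha
  · ext a
    simp only [Set.mem_setOf_eq, Defends]
    rw [groundedMem_iff att hwf a]
    constructor
    · intro h b hb; obtain ⟨c, h1, h2⟩ := h b hb; exact ⟨c, h2, h1⟩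
    · intro h b hb; obtain ⟨c, h1, h2⟩ := h b hb; exact ⟨c, h2, h1⟩

theorem groundedMem_subset (hwf : WellFounded (Relation.TransGen att))
    (E : Set α) (hE : CompleteExt att E) :
    ∀ a, groundedMem att hwf a → a ∈ E := by
  intro a
  induction a using hwf.induction with
  | _ a ih =>
    intro ha
    rw [hE.2]
    intro b hb
    obtain ⟨c, hcb, hc⟩ := (groundedMem_iff att hwf a).1 ha b hb
    exact ⟨c, ih c (Relation.TransGen.head hcb (Relation.TransGen.single hb)) hc, hcb⟩

theorem complete_unique (hwf : WellFounded (Relation.TransGen att))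
    (E F : Set α) (hE : CompleteExt att E) (hF : CompleteExt att F) : E = F := by
  ext a
  induction a using hwf.induction with
  | _ a ih =>
    rw [hE.2, hF.2]
    simp only [Set.mem_setOf_eq, Defends]
    constructor <;> intro h b hb
    · obtain ⟨c, hc, hcb⟩ := h b hb
      exact ⟨c, (ih c (Relation.TransGen.head hcb (Relation.TransGen.single hb))).1 hc, hcb⟩
    · obtain ⟨c, hc, hcb⟩ := h b hb
      exact ⟨c, (ih c (Relation.TransGen.head hcb (Relation.TransGen.single hb))).2 hc, hcb⟩

end Aux

/-- A finite acyclic attack relation is well-founded, hence every completist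
semantics (any nonempty set of complete extensions) yields the same unique
extension, namely the grounded extension. -/
theorem stmt_10 {α : Type*} [Fintype α] (att : α → α → Prop)
    (hacyc : ∀ a : α, ¬ Relation.TransGen att a a) :
    WellFounded att ∧
    (∃! E : Set α, CompleteExt att E) ∧
    (∀ σ : Set (Set α), σ.Nonempty → (∀ E ∈ σ, CompleteExt att E) →
      ∀ G : Set α, IsGrounded att G → σ = {G}) := by
  have hirr : IsIrrefl α (Relation.TransGen att) := ⟨hacyc⟩
  have htr : IsTrans α (Relation.TransGen att) := ⟨fun _ _ _ => Relation.TransGen.trans⟩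
  have hwf : WellFounded (Relation.TransGen att) :=
    Finite.wellFounded_of_trans_of_irrefl _
  refine ⟨Subrelation.wf (fun h => Relation.TransGen.single h) hwf, ?_, ?_⟩
  · exact ⟨{a | groundedMem att hwf a}, groundedMem_complete att hwf,
      fun E hE => complete_unique att hwf E _ hE (groundedMem_complete att hwf)⟩
  · intro σ ⟨E0, hE0⟩ hσ G hG
    ext E
    simp only [Set.mem_singleton_iff]
    constructor
    · intro hE
      exact complete_unique att hwf E G (hσ E hE) hG.1
    · intro hE
      subst hE
      rwa [complete_unique att hwf E E0 hG.1 (hσ E0 hE0)]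
end

section
/- For a finite argumentation framework, the characteristic function F(E) = {a | every attacker of a is attacked by some member of E} is monotone with respect to set inclusion, and its least fixed point is conflict-free and equals the grounded extension. -/
/-- The characteristic function F(E) = {a | every attacker of a is attacked by some
member of E} is monotone, and its least fixed point is conflict-free and equals
the grounded extension. -/
theorem stmt_16 {α : Type*} [Fintype α] (att : α → α → Prop) :
    Monotone (fun E : Set α => {a : α | Defends att E a}) ∧
    ∀ L : Set α, {a : α | Defends att L a} = L →
      (∀ M : Set α, {a : α | Defends att M a} = M → L ⊆ M) →
      ConflictFree att L ∧ IsGrounded att L := by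
  have hmono : Monotone (fun E : Set α => {a : α | Defends att E a}) := by
    intro E E' hEE' a ha b hb
    obtain ⟨c, hc, hcb⟩ := ha b hb
    exact ⟨c, hEE' hc, hcb⟩
  refine ⟨hmono, fun L hL hleast => ?_⟩
  set f : Set α →o Set α := ⟨fun E => {a : α | Defends att E a}, hmono⟩ with hf
  -- L is below every prefixed point of f
  have hLpre : ∀ M : Set α, {a : α | Defends att M a} ⊆ M → L ⊆ M := by
    intro M hM
    have h1 : L ⊆ OrderHom.lfp f := hleast _ (OrderHom.map_lfp f)
    exact h1.trans (OrderHom.lfp_le f hM)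
  -- conflict-freeness
  have hcf : ConflictFree att L := by
    set M : Set α := {x ∈ L | ∀ y ∈ L, ¬ att y x ∧ ¬ att x y} with hMdef
    have hML : M ⊆ L := fun x hx => hx.1
    have hpre : {a : α | Defends att M a} ⊆ M := by
      intro a ha
      have haL : a ∈ L := by
        rw [← hL]
        exact fun b hb => (ha b hb).imp fun c hc => ⟨hML hc.1, hc.2⟩
      have hnoatt : ∀ y ∈ L, ¬ att y a := by
        intro y hy hya
        obtain ⟨c, hc, hcy⟩ := ha y hya
        exact (hc.2 y hy).2 hcy
      refine ⟨haL, fun y hy => ⟨hnoatt y hy, fun hay => ?_⟩⟩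
      have hyD : Defends att L y := by
        have : y ∈ {a : α | Defends att L a} := hL.symm ▸ hy
        exact this
      obtain ⟨c, hc, hca⟩ := hyD a hay
      exact hnoatt c hc hca
    intro a haL b hbL hab
    exact ((hLpre M hpre haL).2 b hbL).2 hab
  have hcomp : CompleteExt att L := ⟨hcf, hL.symm⟩
  exact ⟨hcf, hcomp, fun E hE => hleast E hE.2.symm⟩
end
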